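/- Upper tail bound for a slowed one-way epidemic: Let 0 < ρ ≤ 1 be a real number, 2 ≤ m ≤ n integers, and γ > 0 a real number. Let X = X_1 + ... + X_{m-1}, where the X_i are independent geometric random variables and X_i has success probability (ρ/4)·i·(m-i)/(n·(n-1)). Then P(X > (16/ρ)·(n²/m)·(log₂ m + 2γ·log₂ n)) ≤ 2·n^{-γ}. -/

import Mathlib

/-!
Chernoff's bound with `θ = q / 2`, where `q = (ρ/4)(m-1)/(n(n-1))` is the smallest success
probability: a geometric variable with success probability `p ≥ q` has moment generating
function `p / (p - θ) ≤ exp (q / p)` at `θ`, and the partial fractions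
`1 / (i (m - i)) = (1 / i + 1 / (m - i)) / m` give
`∑ q / p_i = (m - 1) ∑ 1 / (i (m - i)) ≤ 2 ((m - 1) / m) H_{m-1} ≤ 2 ((m - 1) / m) log₂ m`.
The threshold is chosen so that `θ` times it exceeds this sum by at least `γ log n`.
-/

open MeasureTheory ProbabilityTheory Real

theorem le_logb_two_one_add {x : ℝ} (hx0 : 0 ≤ x) (hx1 : x ≤ 1) : x ≤ logb 2 (1 + x) := by
  have hbernoulli : (2 : ℝ) ^ x ≤ 1 + x := by
    simpa [one_add_one_eq_two] using
      rpow_one_add_le_one_add_mul_self (s := 1) (by norm_num) hx0 hx1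
  calc x = logb 2 (2 ^ x) := (logb_rpow (by norm_num) (by norm_num)).symm
    _ ≤ logb 2 (1 + x) := logb_le_logb_of_le (by norm_num) (by positivity) hbernoulli

theorem harmonic_le_logb_two (n : ℕ) : (harmonic n : ℝ) ≤ logb 2 (n + 1) := by
  have hstep : ∀ k : ℕ, ((k : ℝ) + 1)⁻¹ ≤ logb 2 ((k + 1 : ℕ) + 1) - logb 2 ((k : ℝ) + 1) := by
    intro k
    have hk : (0 : ℝ) < k + 1 := by positivity
    have hratio : ((k + 1 : ℕ) + 1 : ℝ) / (k + 1) = 1 + ((k : ℝ) + 1)⁻¹ := by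
      field_simp
      push_cast
      ring
    rw [← logb_div (by positivity) hk.ne', hratio]
    exact le_logb_two_one_add (by positivity) (inv_le_one_of_one_le₀ (by simp))
  calc (harmonic n : ℝ) = ∑ k ∈ Finset.range n, ((k : ℝ) + 1)⁻¹ := by simp [harmonic]
    _ ≤ ∑ k ∈ Finset.range n, (logb 2 ((k + 1 : ℕ) + 1) - logb 2 ((k : ℝ) + 1)) :=
        Finset.sum_le_sum fun k _ => hstep k
    _ = logb 2 (n + 1) := by
        rw [Finset.sum_range_sub (fun k : ℕ => logb 2 ((k : ℝ) + 1))]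
        simp

theorem log_le_logb_two {x : ℝ} (hx : 1 ≤ x) : log x ≤ logb 2 x := by
  have h2 : 0 < log 2 := log_pos one_lt_two
  rw [logb, le_div_iff₀ h2]
  nlinarith [log_two_lt_d9, log_nonneg hx]

theorem sum_range_inv_mul_sub_le (m : ℕ) :
    ∑ i ∈ Finset.range (m - 1), (((i : ℝ) + 1) * (m - ((i : ℝ) + 1)))⁻¹
      ≤ 2 / m * logb 2 m := by
  set H := ∑ i ∈ Finset.range (m - 1), ((i : ℝ) + 1)⁻¹
  have hpartial : ∀ i ∈ Finset.range (m - 1), (((i : ℝ) + 1) * (m - ((i : ℝ) + 1)))⁻¹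
      = (m : ℝ)⁻¹ * (((i : ℝ) + 1)⁻¹ + (m - ((i : ℝ) + 1))⁻¹) := by
    intro i hi
    have hi : (i : ℝ) + 2 ≤ m := by
      exact_mod_cast (show i + 2 ≤ m by have := Finset.mem_range.mp hi; omega)
    have : (m : ℝ) ≠ 0 := by linarith
    have : (m : ℝ) - (i + 1) ≠ 0 := by linarith
    field_simp
    ring
  have hreflect : ∑ i ∈ Finset.range (m - 1), ((m : ℝ) - ((i : ℝ) + 1))⁻¹ = H := by
    rw [← Finset.sum_range_reflect]
    refine Finset.sum_congr rfl fun i hi => ?_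
    have hi := Finset.mem_range.mp hi
    rw [Nat.cast_sub (by omega), Nat.cast_sub (by omega), Nat.cast_sub (by omega)]
    congr 1
    push_cast
    ring
  have hH : H ≤ logb 2 m := by
    rcases Nat.eq_zero_or_pos m with rfl | hm
    · simp [H]
    · simpa [H, harmonic, Nat.cast_sub hm] using harmonic_le_logb_two (m - 1)
  rw [Finset.sum_congr rfl hpartial, ← Finset.mul_sum, Finset.sum_add_distrib, hreflect]
  calc (m : ℝ)⁻¹ * (H + H) = 2 / m * H := by ring
    _ ≤ 2 / m * logb 2 m := by gcongr

theorem one_sub_mul_exp_lt_one {p θ : ℝ} (hθ : θ < p) : (1 - p) * exp θ < 1 := by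
  calc (1 - p) * exp θ ≤ exp (-p) * exp θ := by
        gcongr
        linarith [add_one_le_exp (-p)]
    _ = exp (θ - p) := by rw [← exp_add]; ring_nf
    _ < 1 := exp_lt_one_iff.mpr (by linarith)

theorem div_sub_half_le_exp_div {p q : ℝ} (hp : 0 < p) (hq : 0 ≤ q) (hqp : q ≤ p) :
    p / (p - q / 2) ≤ exp (q / p) := by
  calc p / (p - q / 2) ≤ q / p + 1 := by
        rw [div_le_iff₀ (by linarith), div_add_one hp.ne', div_mul_eq_mul_div, le_div_iff₀ hp]
        nlinarith
    _ ≤ exp (q / p) := add_one_le_exp _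

/-- Counts the trials up to and including the first success, so the support is `{1, 2, …}`
(unlike Mathlib's `geometricMeasure`, which starts at `0`). -/
def HasGeometricLaw {Ω : Type*} [MeasurableSpace Ω] (μ : Measure Ω) (Y : Ω → ℕ) (p : ℝ) :
    Prop :=
  ∀ j : ℕ, 1 ≤ j → μ {ω | Y ω = j} = ENNReal.ofReal ((1 - p) ^ (j - 1) * p)

namespace HasGeometricLaw

variable {Ω : Type*} [MeasurableSpace Ω] {μ : Measure Ω} {Y : Ω → ℕ} {p θ : ℝ}

/-- The atom at `0` is kept, so that `θ = 0` shows it to be null. -/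
theorem lintegral_exp_mul (hY : HasGeometricLaw μ Y p) (hYm : Measurable Y) (hp0 : 0 ≤ p)
    (hp1 : p ≤ 1) (hr : (1 - p) * exp θ < 1) :
    ∫⁻ ω, ENNReal.ofReal (exp (θ * Y ω)) ∂μ
      = μ {ω | Y ω = 0} + ENNReal.ofReal (p * exp θ / (1 - (1 - p) * exp θ)) := by
  have hr0 : 0 ≤ (1 - p) * exp θ := by have := exp_pos θ; nlinarith
  have hterm : ∀ k : ℕ, ENNReal.ofReal (exp (θ * (k + 1 : ℕ))) * μ {ω | Y ω = k + 1}
      = ENNReal.ofReal (p * exp θ * ((1 - p) * exp θ) ^ k) := by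
    intro k
    rw [hY (k + 1) k.succ_pos, ← ENNReal.ofReal_mul (exp_pos _).le, Nat.add_sub_cancel,
      Nat.cast_succ, mul_add_one, exp_add, mul_comm θ, exp_nat_mul, mul_pow]
    ring_nf
  rw [← lintegral_map (f := fun j : ℕ => ENNReal.ofReal (exp (θ * j))) (by fun_prop) hYm,
    lintegral_countable', tsum_eq_zero_add' ENNReal.summable]
  simp only [Measure.map_apply hYm (measurableSet_singleton _), Set.preimage,
    Set.mem_singleton_iff, hterm, Nat.cast_zero, mul_zero, exp_zero, ENNReal.ofReal_one, one_mul]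
  rw [← ENNReal.ofReal_tsum_of_nonneg (fun k => by positivity)
    ((summable_geometric_of_lt_one hr0 hr).mul_left _), tsum_mul_left,
    tsum_geometric_of_lt_one hr0 hr, div_eq_mul_inv]

variable [IsProbabilityMeasure μ]

theorem measure_eq_zero (hY : HasGeometricLaw μ Y p) (hYm : Measurable Y) (hp0 : 0 < p)
    (hp1 : p ≤ 1) : μ {ω | Y ω = 0} = 0 := by
  have h := hY.lintegral_exp_mul hYm hp0.le hp1 (θ := 0) (by simpa using hp0)
  simp only [zero_mul, exp_zero, ENNReal.ofReal_one, lintegral_const, measure_univ, mul_one,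
    sub_sub_cancel, div_self hp0.ne'] at h
  exact (ENNReal.add_left_inj ENNReal.one_ne_top).mp (by rw [← h, zero_add])

theorem integrable_exp_mul (hY : HasGeometricLaw μ Y p) (hYm : Measurable Y) (hp0 : 0 < p)
    (hp1 : p ≤ 1) (hr : (1 - p) * exp θ < 1) : Integrable (fun ω => exp (θ * Y ω)) μ := by
  refine ⟨by fun_prop, ?_⟩
  rw [hasFiniteIntegral_iff_ofReal (.of_forall fun _ => (exp_pos _).le),
    hY.lintegral_exp_mul hYm hp0.le hp1 hr]
  exact ENNReal.add_lt_top.mpr ⟨measure_lt_top _ _, ENNReal.ofReal_lt_top⟩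

theorem mgf_eq (hY : HasGeometricLaw μ Y p) (hYm : Measurable Y) (hp0 : 0 < p) (hp1 : p ≤ 1)
    (hr : (1 - p) * exp θ < 1) :
    mgf (fun ω => (Y ω : ℝ)) μ θ = p * exp θ / (1 - (1 - p) * exp θ) := by
  have hr' : 0 < 1 - (1 - p) * exp θ := by linarith
  rw [mgf, integral_eq_lintegral_of_nonneg_ae (.of_forall fun _ => (exp_pos _).le) (by fun_prop),
    hY.lintegral_exp_mul hYm hp0.le hp1 hr, hY.measure_eq_zero hYm hp0 hp1, zero_add,
    ENNReal.toReal_ofReal (by positivity)]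

theorem mgf_le (hY : HasGeometricLaw μ Y p) (hYm : Measurable Y) (hp0 : 0 < p) (hp1 : p ≤ 1)
    (hθ : θ < p) : mgf (fun ω => (Y ω : ℝ)) μ θ ≤ p / (p - θ) := by
  have hr := one_sub_mul_exp_lt_one hθ
  have hexp : exp θ * (1 - θ) ≤ 1 := by
    calc exp θ * (1 - θ) ≤ exp θ * exp (-θ) := by gcongr; linarith [add_one_le_exp (-θ)]
      _ = 1 := by rw [← exp_add, add_neg_cancel, exp_zero]
  rw [hY.mgf_eq hYm hp0 hp1 hr, div_le_div_iff₀ (by linarith) (by linarith)]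
  nlinarith

end HasGeometricLaw

theorem measure_le_sum_le_exp_of_hasGeometricLaw {Ω ι : Type*} [MeasurableSpace Ω]
    {μ : Measure Ω} [IsProbabilityMeasure μ] [Fintype ι] {X : ι → Ω → ℕ} {p : ι → ℝ} {q : ℝ}
    (hmeas : ∀ i, Measurable (X i)) (hindep : iIndepFun X μ)
    (hX : ∀ i, HasGeometricLaw μ (X i) (p i)) (hp0 : ∀ i, 0 < p i) (hp1 : ∀ i, p i ≤ 1)
    (hq : 0 ≤ q) (hqp : ∀ i, q ≤ p i) (t : ℝ) :
    μ {ω | t ≤ ∑ i, (X i ω : ℝ)} ≤ ENNReal.ofReal (exp (∑ i, q / p i - q / 2 * t)) := by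
  set Y : ι → Ω → ℝ := fun i ω => X i ω
  have hYm : ∀ i, Measurable (Y i) := fun i => measurable_from_nat.comp (hmeas i)
  have hYindep : iIndepFun Y μ := hindep.comp (fun _ => Nat.cast) fun _ => measurable_from_nat
  have hθp : ∀ i, q / 2 < p i := fun i => by linarith [hqp i, hp0 i]
  have hint : Integrable (fun ω => exp (q / 2 * (∑ i, Y i) ω)) μ :=
    hYindep.integrable_exp_mul_sum hYm fun i _ => (hX i).integrable_exp_mul (hmeas i) (hp0 i)
      (hp1 i) (one_sub_mul_exp_lt_one (hθp i))
  have hchernoff := measure_ge_le_exp_mul_mgf t (by positivity) hint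
  rw [hYindep.mgf_sum hYm] at hchernoff
  have hsum : {ω | t ≤ ∑ i, (X i ω : ℝ)} = {ω | t ≤ (∑ i, Y i) ω} := by
    simp only [Finset.sum_apply, Y]
  rw [hsum, ← ofReal_measureReal]
  refine ENNReal.ofReal_le_ofReal (hchernoff.trans ?_)
  rw [sub_eq_neg_add, exp_add, exp_sum, neg_mul]
  gcongr with i
  · exact fun _ _ => mgf_nonneg
  · exact ((hX i).mgf_le (hmeas i) (hp0 i) (hp1 i) (hθp i)).trans
      (div_sub_half_le_exp_div (hp0 i) hq (hqp i))

noncomputable def epidemicRate (ρ : ℝ) (m n : ℕ) (a : ℝ) : ℝ :=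
  ρ / 4 * (a * (m - a)) / (n * (n - 1))

section epidemicRate

variable {ρ a : ℝ} {m n : ℕ}

theorem sub_one_le_mul_sub (ha : 1 ≤ a) (ham : a + 1 ≤ m) : (m : ℝ) - 1 ≤ a * (m - a) := by
  nlinarith

theorem epidemicRate_pos (hρ : 0 < ρ) (ha : 1 ≤ a) (ham : a + 1 ≤ m) (hmn : m ≤ n) :
    0 < epidemicRate ρ m n a := by
  have hn : (m : ℝ) ≤ n := by exact_mod_cast hmn
  have : 0 < a * (m - a) := by nlinarith
  have : (0 : ℝ) < n * (n - 1) := by nlinarith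
  unfold epidemicRate
  positivity

theorem epidemicRate_le_one (hρ0 : 0 ≤ ρ) (hρ1 : ρ ≤ 1) (ha : 1 ≤ a) (ham : a + 1 ≤ m)
    (hmn : m ≤ n) : epidemicRate ρ m n a ≤ 1 := by
  have hn : (m : ℝ) ≤ n := by exact_mod_cast hmn
  have hprod : a * (m - a) ≤ n * (n - 1) := by nlinarith
  unfold epidemicRate
  rw [div_le_one (by nlinarith)]
  nlinarith [mul_nonneg hρ0 (show 0 ≤ a * (m - a) by nlinarith)]

theorem epidemicRate_one_le (hρ : 0 ≤ ρ) (ha : 1 ≤ a) (ham : a + 1 ≤ m) :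
    epidemicRate ρ m n 1 ≤ epidemicRate ρ m n a := by
  have hn : (0 : ℝ) ≤ n * (n - 1) := by
    rcases Nat.eq_zero_or_pos n with rfl | hn
    · simp
    · have : (1 : ℝ) ≤ n := by exact_mod_cast hn
      nlinarith
  unfold epidemicRate
  rw [one_mul]
  gcongr ρ / 4 * ?_ / _
  exact sub_one_le_mul_sub ha ham

theorem epidemicRate_one_div (hρ : ρ ≠ 0) (hn : 2 ≤ n) :
    epidemicRate ρ m n 1 / epidemicRate ρ m n a = (m - 1) * (a * (m - a))⁻¹ := by
  have hn : (2 : ℝ) ≤ n := by exact_mod_cast hn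
  unfold epidemicRate
  rw [div_div_div_cancel_right₀ (by nlinarith), mul_div_mul_left _ _ (by positivity), one_mul,
    div_eq_mul_inv]

theorem sum_epidemicRate_one_div_le (hρ : ρ ≠ 0) (hm : 1 ≤ m) (hn : 2 ≤ n) :
    ∑ i : Fin (m - 1), epidemicRate ρ m n 1 / epidemicRate ρ m n ((i : ℝ) + 1)
      ≤ 2 * ((m - 1) / m) * logb 2 m := by
  simp_rw [epidemicRate_one_div hρ hn, ← Finset.mul_sum]
  rw [Fin.sum_univ_eq_sum_range (fun i : ℕ => (((i : ℝ) + 1) * (m - ((i : ℝ) + 1)))⁻¹)]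
  calc ((m : ℝ) - 1) * ∑ i ∈ Finset.range (m - 1), (((i : ℝ) + 1) * (m - ((i : ℝ) + 1)))⁻¹
      ≤ (m - 1) * (2 / m * logb 2 m) := by
        have : (1 : ℝ) ≤ m := by exact_mod_cast hm
        gcongr
        exact sum_range_inv_mul_sub_le m
    _ = 2 * ((m - 1) / m) * logb 2 m := by ring

theorem epidemic_exponent_le {γ : ℝ} (hρ : 0 < ρ) (hm : 2 ≤ m) (hmn : m ≤ n) (hγ : 0 ≤ γ) :
    ∑ i : Fin (m - 1), epidemicRate ρ m n 1 / epidemicRate ρ m n ((i : ℝ) + 1)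
        - epidemicRate ρ m n 1 / 2
          * ((16 / ρ) * ((n : ℝ) ^ 2 / m) * (logb 2 m + 2 * γ * logb 2 n))
      ≤ -(γ * log n) := by
  have hmR : (2 : ℝ) ≤ m := by exact_mod_cast hm
  have hnR : (m : ℝ) ≤ n := by exact_mod_cast hmn
  set L := logb 2 m + 2 * γ * logb 2 n
  set c := ((m : ℝ) - 1) / m
  have hc : 1 / 2 ≤ c := by rw [div_le_div_iff₀ (by norm_num) (by linarith)]; linarith
  have hlogm : 0 ≤ logb 2 m := logb_nonneg one_lt_two (by linarith)
  have hlogn : 0 ≤ logb 2 n := logb_nonneg one_lt_two (by linarith)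
  have hL : 0 ≤ L := by positivity
  have hsum := sum_epidemicRate_one_div_le (m := m) hρ.ne' (by omega) (hm.trans hmn)
  have htime : epidemicRate ρ m n 1 / 2 * ((16 / ρ) * ((n : ℝ) ^ 2 / m) * L)
      = 2 * c * (n / (n - 1)) * L := by
    unfold epidemicRate
    simp only [c]
    field_simp [show (n : ℝ) - 1 ≠ 0 by linarith]
    ring
  have hn1 : 1 ≤ (n : ℝ) / (n - 1) := by rw [le_div_iff₀ (by linarith)]; linarith
  have htime_ge : 2 * c * L ≤ 2 * c * (n / (n - 1)) * L := by
    have : 0 ≤ 2 * c * L := by positivity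
    nlinarith
  have hlog := log_le_logb_two (show (1 : ℝ) ≤ n by linarith)
  rw [htime]
  nlinarith [mul_le_mul_of_nonneg_left hlog hγ, mul_nonneg hγ hlogn,
    mul_nonneg (mul_nonneg (sub_nonneg.2 hc) hγ) hlogn]

end epidemicRate

/-- Upper tail bound for a slowed one-way epidemic: `X = X_1 + ⋯ + X_{m-1}` where
`X_i` is geometric with success probability `(ρ/4)·i·(m-i)/(n·(n-1))`; then
`P(X > (16/ρ)·(n²/m)·(log₂ m + 2γ·log₂ n)) ≤ 2·n^{-γ}`. -/
theorem slowed_one_way_epidemic_upper_tail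
    {Ω : Type*} [MeasurableSpace Ω] (μ : Measure Ω) [IsProbabilityMeasure μ]
    (ρ : ℝ) (hρ0 : 0 < ρ) (hρ1 : ρ ≤ 1)
    (m n : ℕ) (hm : 2 ≤ m) (hmn : m ≤ n)
    (X : Fin (m - 1) → Ω → ℕ)
    (hmeas : ∀ i, Measurable (X i))
    (hindep : iIndepFun X μ)
    (hgeom : ∀ i : Fin (m - 1), ∀ j : ℕ, 1 ≤ j →
      μ {ω | X i ω = j}
        = ENNReal.ofReal
            ((1 - (ρ / 4) * (((i : ℝ) + 1) * ((m : ℝ) - ((i : ℝ) + 1)))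
                    / ((n : ℝ) * ((n : ℝ) - 1))) ^ (j - 1)
              * ((ρ / 4) * (((i : ℝ) + 1) * ((m : ℝ) - ((i : ℝ) + 1)))
                    / ((n : ℝ) * ((n : ℝ) - 1)))))
    (γ : ℝ) (hγ : 0 < γ) :
    μ {ω | (16 / ρ) * ((n : ℝ) ^ 2 / m) * (Real.logb 2 m + 2 * γ * Real.logb 2 n)
            < ∑ i, (X i ω : ℝ)}
      ≤ ENNReal.ofReal (2 * (n : ℝ) ^ (-γ)) := by
  have hrange : ∀ i : Fin (m - 1), 1 ≤ (i : ℝ) + 1 ∧ (i : ℝ) + 1 + 1 ≤ m := fun i =>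
    ⟨by simp, by exact_mod_cast (show (i : ℕ) + 1 + 1 ≤ m by omega)⟩
  have htail := measure_le_sum_le_exp_of_hasGeometricLaw hmeas hindep hgeom
    (fun i => epidemicRate_pos hρ0 (hrange i).1 (hrange i).2 hmn)
    (fun i => epidemicRate_le_one hρ0.le hρ1 (hrange i).1 (hrange i).2 hmn)
    (epidemicRate_pos hρ0 le_rfl (by exact_mod_cast hm) hmn).le
    (fun i => epidemicRate_one_le hρ0.le (hrange i).1 (hrange i).2)
    ((16 / ρ) * ((n : ℝ) ^ 2 / m) * (Real.logb 2 m + 2 * γ * Real.logb 2 n))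
  refine (measure_mono (Set.ofPred_subset_ofPred.mpr fun ω => le_of_lt)).trans (htail.trans (ENNReal.ofReal_le_ofReal ?_))
  have hn : (0 : ℝ) < n := by exact_mod_cast (by omega : 0 < n)
  calc exp (_ - _) ≤ exp (-(γ * log n)) := exp_le_exp.mpr (epidemic_exponent_le hρ0 hm hmn hγ.le)
    _ = (n : ℝ) ^ (-γ) := by rw [rpow_def_of_pos hn]; ring_nf
    _ ≤ 2 * (n : ℝ) ^ (-γ) := by linarith [rpow_nonneg hn.le (-γ)]
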